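/- arXiv:math-ph/0105014 — 6 statements merged into one kernel-verified Lean document; each statement's English description precedes it below -/
import Mathlib

section
/- For the dihedral group I_2(N) with constant multiplicity m, any m-quasiinvariant homogeneous polynomial of degree d ≤ mN is invariant under the group. -/
/-- Evaluate a two-variable polynomial at `(z, conj z)`. -/
noncomputable def evalZ (P : MvPolynomial (Fin 2) ℂ) (z : ℂ) : ℂ :=
  MvPolynomial.eval (fun i => if i = 0 then z else (starRingEnd ℂ) z) P

/-- `m`-quasiinvariance for the dihedral group `I₂(N)` in polar coordinates:
all odd angular derivatives up to order `2m-1` vanish on the mirror lines `φ = πk/N`. -/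
def IsQuasiInv (N m : ℕ) (P : MvPolynomial (Fin 2) ℂ) : Prop :=
  ∀ (r : ℝ) (k : ℕ), k < N → ∀ s : ℕ, 1 ≤ s → s ≤ m →
    iteratedDeriv (2*s-1)
      (fun φ : ℝ => evalZ P ((r : ℂ) * Complex.exp ((φ : ℂ) * Complex.I)))
      (Real.pi * k / N) = 0

/-! On the unit circle a homogeneous `P` of degree `d` is the trigonometric polynomial
`∑ c_b e^{i f_b φ}` with frequencies `f_b = d - 2b`. Quasi-invariance says that
`∑ c_b f_b ^ (2s-1) e^{i f_b π k / N}` vanishes for `k < N` and `s ≤ m`; a discrete Fourier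
transform in `k` turns this into `∑_{b ≡ r [MOD N]} c_b f_b (f_b²)^t = 0` for every residue `r`
and `t < m`. Since `d ≤ m N`, at most `m` values of `f_b²` occur in a residue class, so by
Vandermonde the sum of `c_b f_b` over each level set of `f_b²` vanishes. Such a level set is
`{b}`, or `{b, d - b}` exactly when `N ∣ f_b`. Hence `c_b = 0` unless `N ∣ f_b`, which gives
invariance under the rotations, and `c_{d-b} = c_b`, which gives invariance under `z ↦ z̄`. -/

open Complex Finset ComplexConjugate
open scoped Real

theorem Finset.sum_fiber_eq_zero_of_sum_mul_pow_eq_zero {ι R : Type*} [CommRing R] [IsDomain R]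
    [DecidableEq R] {T : Finset ι} {u x : ι → R} {m : ℕ} (hT : #(T.image x) ≤ m)
    (h : ∀ t < m, ∑ i ∈ T, u i * x i ^ t = 0) (y : R) :
    ∑ i ∈ T with x i = y, u i = 0 := by
  set S := T.image x
  let e := S.equivFin
  have hv := Matrix.eq_zero_of_forall_pow_sum_mul_pow_eq_zero
    (f := fun j => (e.symm j : R)) (v := fun j => ∑ i ∈ T with x i = e.symm j, u i)
    (Subtype.val_injective.comp e.symm.injective) fun t => by
      rw [← h t (by omega), ← sum_fiberwise_of_maps_to (g := x) (t := S)
        fun i hi => mem_image_of_mem x hi, ← S.sum_coe_sort, ← e.symm.sum_comp]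
      simp only [sum_mul]
      exact sum_congr rfl fun j _ => sum_congr rfl fun i hi => by rw [(mem_filter.mp hi).2]
  by_cases hy : y ∈ S
  · simpa using congrFun hv (e ⟨y, hy⟩)
  · refine sum_eq_zero fun i hi => absurd ?_ hy
    obtain ⟨hiT, rfl⟩ := mem_filter.mp hi
    exact mem_image_of_mem x hiT

theorem ZMod.sum_fiber_eq_zero_of_forall_sum_stdAddChar_mul_eq_zero {N : ℕ} [NeZero N] {ι : Type*}
    (T : Finset ι) (g : ι → ZMod N) (u : ι → ℂ)
    (h : ∀ k : ZMod N, ∑ i ∈ T, stdAddChar (-(g i * k)) * u i = 0) (r : ZMod N) :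
    ∑ i ∈ T with g i = r, u i = 0 := by
  let Φ : ZMod N → ℂ := fun r => ∑ i ∈ T with g i = r, u i
  have hΦ : ZMod.dft Φ = 0 := by
    ext k
    rw [ZMod.dft_apply, Pi.zero_apply, ← h k, ← sum_fiberwise T g]
    refine sum_congr rfl fun r _ => ?_
    rw [smul_eq_mul, mul_sum]
    exact sum_congr rfl fun i hi => by rw [(mem_filter.mp hi).2]
  exact congrFun ((LinearEquiv.map_eq_zero_iff _).mp hΦ) r

lemma iteratedDeriv_sum_mul_cexp {ι : Type*} (T : Finset ι) (a c : ι → ℂ) (n : ℕ) :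
    iteratedDeriv n (fun φ : ℝ => ∑ i ∈ T, a i * cexp (c i * φ)) =
      fun φ : ℝ => ∑ i ∈ T, a i * c i ^ n * cexp (c i * φ) := by
  induction n with
  | zero => simp
  | succ n ih =>
    rw [iteratedDeriv_succ, ih]
    funext φ
    refine (HasDerivAt.fun_sum fun i _ => ?_).deriv
    have hlin : HasDerivAt (fun φ : ℝ => c i * (φ : ℂ)) (c i) φ := by
      simpa using (hasDerivAt_id φ).ofReal_comp.const_mul (c i)
    exact (hlin.cexp.const_mul (a i * c i ^ n)).congr_deriv (by ring)

lemma card_le_of_forall_lt_mul_and_natCast_eq {N m : ℕ} [NeZero N] {S : Finset ℕ} {r : ZMod N}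
    (hS : ∀ b ∈ S, b < m * N ∧ (b : ZMod N) = r) : #S ≤ m := by
  have hsub : S ⊆ {b ∈ range (m * N) | b ≡ r.val [MOD N]} := fun b hb => by
    obtain ⟨hlt, hr⟩ := hS b hb
    refine mem_filter.mpr ⟨mem_range.mpr hlt, (ZMod.natCast_eq_natCast_iff _ _ _).mp ?_⟩
    rw [hr, ZMod.natCast_zmod_val]
  refine (card_le_card hsub).trans_eq ?_
  rw [← Nat.count_eq_card_filter_range, Nat.count_modEq_card _ (NeZero.pos N)]
  simp [NeZero.ne N]

lemma pow_mul_conj_pow_of_norm_eq_one {w : ℂ} (hw : ‖w‖ = 1) (a c : ℕ) :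
    w ^ a * conj w ^ c = w ^ ((a : ℤ) - c) := by
  have hw0 : w ≠ 0 := norm_ne_zero_iff.mp (by rw [hw]; exact one_ne_zero)
  rw [← inv_eq_conj hw, zpow_sub₀ hw0, zpow_natCast, zpow_natCast, div_eq_mul_inv, inv_pow]

noncomputable def zCoeff (P : MvPolynomial (Fin 2) ℂ) (d b : ℕ) : ℂ :=
  P.coeff (Finsupp.single 0 (d - b) + Finsupp.single 1 b)

/-- The angular frequency of the monomial `z ^ (d - b) * conj z ^ b` on the unit circle. -/
def freq (d b : ℕ) : ℤ := d - 2 * b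

lemma evalZ_eq_sum {P : MvPolynomial (Fin 2) ℂ} {d : ℕ} (hP : P.IsHomogeneous d) (z : ℂ) :
    evalZ P z = ∑ b ∈ range (d + 1), zCoeff P d b * z ^ (d - b) * conj z ^ b := by
  let e : ℕ → Fin 2 →₀ ℕ := fun b => Finsupp.single 0 (d - b) + Finsupp.single 1 b
  have hsupp : P.support ⊆ (range (d + 1)).image e := by
    intro μ hμ
    have hdeg : μ 0 + μ 1 = d := by
      rw [hP.degree_eq_sum_deg_support hμ, ← Finsupp.degree_apply, Finsupp.degree_eq_sum,
        Fin.sum_univ_two]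
    refine mem_image.mpr ⟨μ 1, mem_range.mpr (by omega), ?_⟩
    ext i
    fin_cases i <;> simp [e]
    omega
  rw [evalZ, MvPolynomial.eval_eq', sum_subset hsupp fun μ _ hμ => by
    simp [MvPolynomial.notMem_support_iff.mp hμ], sum_image fun a _ b _ hab => by
    simpa [e] using congr_arg (· 1) hab]
  refine sum_congr rfl fun b _ => ?_
  simp [Fin.prod_univ_two, zCoeff, e, mul_assoc]

lemma evalZ_cexp_mul_I {P : MvPolynomial (Fin 2) ℂ} {d : ℕ} (hP : P.IsHomogeneous d) (φ : ℝ) :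
    evalZ P (cexp (φ * I)) = ∑ b ∈ range (d + 1), zCoeff P d b * cexp (freq d b * I * φ) := by
  rw [evalZ_eq_sum hP]
  refine sum_congr rfl fun b hb => ?_
  rw [mul_assoc, pow_mul_conj_pow_of_norm_eq_one (norm_exp_ofReal_mul_I φ), ← exp_int_mul]
  congr 2
  push_cast [freq, Nat.cast_sub (mem_range_succ_iff.mp hb)]
  ring

lemma freq_sub_self {d b : ℕ} (hb : b ≤ d) : freq d (d - b) = -freq d b := by
  simp only [freq]
  omega

lemma eq_or_eq_sub_of_freq_sq_eq {d a b : ℕ} (h : freq d a ^ 2 = freq d b ^ 2) :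
    a = b ∨ a = d - b := by
  have : (freq d a - freq d b) * (freq d a + freq d b) = 0 := by linear_combination h
  rcases mul_eq_zero.mp this with h' | h' <;> simp only [freq] at h' <;> omega

lemma natCast_sub_eq_natCast_iff_dvd_freq {N d b : ℕ} (hb : b ≤ d) :
    ((d - b : ℕ) : ZMod N) = b ↔ (N : ℤ) ∣ freq d b := by
  rw [← ZMod.intCast_zmod_eq_zero_iff_dvd, freq]
  push_cast [Nat.cast_sub hb]
  constructor <;> intro h <;> linear_combination h

def freqClass (N d : ℕ) (r : ZMod N) : Finset ℕ :=
  {b ∈ range (d + 1) | ((b : ℕ) : ZMod N) = r ∧ freq d b ≠ 0}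

lemma mem_freqClass {N d b : ℕ} {r : ZMod N} :
    b ∈ freqClass N d r ↔ b ≤ d ∧ (b : ZMod N) = r ∧ freq d b ≠ 0 := by
  simp [freqClass]

lemma card_image_freq_sq_le {N m d : ℕ} [NeZero N] (hd : d ≤ m * N) (r : ZMod N) :
    #((freqClass N d r).image fun b => (freq d b : ℂ) ^ 2) ≤ m := by
  refine (card_le_card_of_surjOn (fun b => (freq d b : ℂ) ^ 2)
    (s := {b ∈ freqClass N d r | b < m * N}) ?_).trans
    (card_le_of_forall_lt_mul_and_natCast_eq (r := r) fun b hb => ?_)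
  · intro y hy
    obtain ⟨b, hbT, rfl⟩ := mem_image.mp hy
    by_cases hlt : b < m * N
    · exact ⟨b, mem_filter.mpr ⟨hbT, hlt⟩, rfl⟩
    -- the only index at or above `m * N` is `b = d = m * N`, whose square is also attained at `0`
    obtain ⟨hbd, hbr, hb0⟩ := mem_freqClass.mp hbT
    have hb : b = m * N := by omega
    have hd' : d = m * N := by omega
    refine ⟨0, mem_filter.mpr ⟨mem_freqClass.mpr ⟨Nat.zero_le d, ?_, ?_⟩, ?_⟩, ?_⟩
    · rw [← hbr, hb, Nat.cast_mul, ZMod.natCast_self, mul_zero, Nat.cast_zero]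
    · simp only [freq] at hb0 ⊢; omega
    · simp only [freq] at hb0; omega
    · simp only [freq]; push_cast; rw [hb, hd']; ring
  · obtain ⟨hbT, hlt⟩ := mem_filter.mp hb
    exact ⟨hlt, (mem_freqClass.mp hbT).2.1⟩

lemma mem_freqClass_filter_freq_sq_eq_iff {N d b b0 : ℕ} (hb0 : b0 ≤ d) :
    b ∈ {b ∈ freqClass N d b0 | (freq d b : ℂ) ^ 2 = (freq d b0 : ℂ) ^ 2} ↔
      freq d b0 ≠ 0 ∧ (b = b0 ∨ b = d - b0 ∧ (N : ℤ) ∣ freq d b0) := by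
  rw [mem_filter, mem_freqClass]
  constructor
  · rintro ⟨⟨hbd, hbr, hb⟩, hsq⟩
    have hsq' : freq d b ^ 2 = freq d b0 ^ 2 := by exact_mod_cast hsq
    refine ⟨fun h => hb (pow_eq_zero_iff two_ne_zero |>.mp (by rw [hsq', h]; ring)), ?_⟩
    refine (eq_or_eq_sub_of_freq_sq_eq hsq').imp_right fun hbe => ⟨hbe, ?_⟩
    rwa [← natCast_sub_eq_natCast_iff_dvd_freq hb0, ← hbe]
  · rintro ⟨hb0', rfl | ⟨rfl, hdvd⟩⟩
    · exact ⟨⟨hb0, rfl, hb0'⟩, rfl⟩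
    · refine ⟨⟨Nat.sub_le d b0, (natCast_sub_eq_natCast_iff_dvd_freq hb0).mpr hdvd, ?_⟩, ?_⟩
      · rwa [freq_sub_self hb0, neg_ne_zero]
      · rw [freq_sub_self hb0]
        push_cast
        ring

namespace IsQuasiInv

variable {N m d : ℕ} {P : MvPolynomial (Fin 2) ℂ}

lemma sum_mul_cexp_eq_zero (hq : IsQuasiInv N m P) (hP : P.IsHomogeneous d) {k s : ℕ}
    (hk : k < N) (hs : 1 ≤ s) (hsm : s ≤ m) :
    ∑ b ∈ range (d + 1), zCoeff P d b * (freq d b * I) ^ (2 * s - 1) *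
      cexp (freq d b * I * (π * k / N : ℝ)) = 0 := by
  simpa only [ofReal_one, one_mul, evalZ_cexp_mul_I hP, iteratedDeriv_sum_mul_cexp] using
    hq 1 k hk s hs hsm

lemma sum_filter_natCast_eq_zero [NeZero N] (hq : IsQuasiInv N m P) (hP : P.IsHomogeneous d)
    (r : ZMod N) {t : ℕ} (ht : t < m) :
    ∑ b ∈ range (d + 1) with ((b : ℕ) : ZMod N) = r,
      zCoeff P d b * freq d b * (freq d b ^ 2) ^ t = 0 := by
  refine ZMod.sum_fiber_eq_zero_of_forall_sum_stdAddChar_mul_eq_zero _ _ _ (fun k => ?_) r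
  have h := hq.sum_mul_cexp_eq_zero hP (ZMod.val_lt k) (Nat.le_add_left 1 t) (s := t + 1) ht
  set θ : ℝ := π * k.val / N
  have hchar (b : ℕ) : ZMod.stdAddChar (-((b : ZMod N) * k)) = cexp (-(2 * b) * I * θ) := by
    have : -((b : ZMod N) * k) = (Int.cast (-((b : ℤ) * k.val)) : ZMod N) := by simp
    rw [this, ZMod.stdAddChar_coe]
    congr 1
    push_cast [θ]
    ring
  refine (mul_eq_zero.mp ?_).resolve_left
    (mul_ne_zero (pow_ne_zero (2 * t + 1) I_ne_zero) (exp_ne_zero (d * I * θ)))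
  rw [mul_sum, ← h]
  refine sum_congr rfl fun b _ => ?_
  have hexp : cexp (freq d b * I * θ) = cexp (d * I * θ) * cexp (-(2 * b) * I * θ) := by
    rw [← exp_add]
    push_cast [freq]
    ring_nf
  rw [hchar, hexp, show 2 * (t + 1) - 1 = 2 * t + 1 by omega]
  ring

lemma sum_freqClass_filter_eq_zero [NeZero N] (hq : IsQuasiInv N m P)
    (hP : P.IsHomogeneous d) (hd : d ≤ m * N) (b0 : ℕ) :
    ∑ b ∈ freqClass N d b0 with (freq d b : ℂ) ^ 2 = (freq d b0 : ℂ) ^ 2,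
      zCoeff P d b * freq d b = 0 := by
  refine sum_fiber_eq_zero_of_sum_mul_pow_eq_zero (card_image_freq_sq_le hd _) (fun t ht => ?_) _
  rw [← hq.sum_filter_natCast_eq_zero hP b0 ht, freqClass, ← filter_filter]
  exact sum_filter_of_ne fun b _ hb hf => hb (by rw [hf, Int.cast_zero, mul_zero, zero_mul])

lemma zCoeff_eq_zero [NeZero N] (hq : IsQuasiInv N m P) (hP : P.IsHomogeneous d)
    (hd : d ≤ m * N) {b0 : ℕ} (hb0 : b0 ≤ d) (hdvd : ¬ (N : ℤ) ∣ freq d b0) :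
    zCoeff P d b0 = 0 := by
  have hf : freq d b0 ≠ 0 := fun h => hdvd (h ▸ dvd_zero _)
  have hsum := hq.sum_freqClass_filter_eq_zero hP hd b0
  rw [sum_eq_single_of_mem b0 ((mem_freqClass_filter_freq_sq_eq_iff hb0).mpr ⟨hf, .inl rfl⟩)
    fun b hb hne => by
      simp [mem_freqClass_filter_freq_sq_eq_iff hb0, hne, hdvd] at hb] at hsum
  exact (mul_eq_zero.mp hsum).resolve_right (Int.cast_ne_zero.mpr hf)

lemma zCoeff_sub_self [NeZero N] (hq : IsQuasiInv N m P) (hP : P.IsHomogeneous d)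
    (hd : d ≤ m * N) {b0 : ℕ} (hb0 : b0 ≤ d) :
    zCoeff P d (d - b0) = zCoeff P d b0 := by
  by_cases hdvd : (N : ℤ) ∣ freq d b0
  · by_cases hf : freq d b0 = 0
    · rw [show d - b0 = b0 by simp only [freq] at hf; omega]
    have hmem (b : ℕ) := mem_freqClass_filter_freq_sq_eq_iff (N := N) (b := b) hb0
    have hsum := hq.sum_freqClass_filter_eq_zero hP hd b0
    rw [sum_eq_add_of_mem b0 (d - b0) ((hmem _).mpr ⟨hf, .inl rfl⟩)
      ((hmem _).mpr ⟨hf, .inr ⟨rfl, hdvd⟩⟩) (by simp only [freq] at hf; omega)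
      fun b hb hne => by simp [hmem, hne.1, hne.2] at hb, freq_sub_self hb0] at hsum
    have hf' : (freq d b0 : ℂ) ≠ 0 := Int.cast_ne_zero.mpr hf
    push_cast at hsum
    exact (mul_right_cancel₀ hf' (by linear_combination hsum)).symm
  · have hdvd' : ¬ (N : ℤ) ∣ freq d (d - b0) := by rwa [freq_sub_self hb0, dvd_neg]
    rw [hq.zCoeff_eq_zero hP hd hb0 hdvd, hq.zCoeff_eq_zero hP hd (Nat.sub_le d b0) hdvd']

end IsQuasiInv

lemma evalZ_mul_eq_of_zCoeff_eq_zero {N d : ℕ} {P : MvPolynomial (Fin 2) ℂ} (hN : N ≠ 0)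
    (hP : P.IsHomogeneous d) (hc : ∀ b ≤ d, ¬ (N : ℤ) ∣ freq d b → zCoeff P d b = 0)
    {w : ℂ} (hw : w ^ N = 1) (z : ℂ) : evalZ P (w * z) = evalZ P z := by
  rw [evalZ_eq_sum hP, evalZ_eq_sum hP]
  refine sum_congr rfl fun b hb => ?_
  have hbd := mem_range_succ_iff.mp hb
  by_cases hdvd : (N : ℤ) ∣ freq d b
  · obtain ⟨q, hq⟩ := hdvd
    have hw1 : w ^ (d - b) * conj w ^ b = 1 := by
      rw [pow_mul_conj_pow_of_norm_eq_one (norm_eq_one_of_pow_eq_one hw hN),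
        show ((d - b : ℕ) : ℤ) - b = freq d b by push_cast [freq, Nat.cast_sub hbd]; ring,
        hq, zpow_mul, zpow_natCast, hw, one_zpow]
    calc _ = zCoeff P d b * z ^ (d - b) * conj z ^ b * (w ^ (d - b) * conj w ^ b) := by
          rw [map_mul]; ring
      _ = _ := by rw [hw1, mul_one]
  · simp [hc b hbd hdvd]

lemma evalZ_conj_eq_of_zCoeff_sub_self {d : ℕ} {P : MvPolynomial (Fin 2) ℂ}
    (hP : P.IsHomogeneous d) (hc : ∀ b ≤ d, zCoeff P d (d - b) = zCoeff P d b) (z : ℂ) :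
    evalZ P (conj z) = evalZ P z := by
  rw [evalZ_eq_sum hP, evalZ_eq_sum hP, ← sum_range_reflect]
  refine sum_congr rfl fun b hb => ?_
  have hbd := mem_range_succ_iff.mp hb
  rw [add_tsub_cancel_right, Nat.sub_sub_self hbd, hc b hbd, conj_conj]
  ring

/-- Any `m`-quasiinvariant of `I₂(N)` homogeneous of degree `d ≤ mN` is invariant
under the dihedral group (rotations by `2πk/N` and reflections). -/
theorem stmt0 (N m d : ℕ) (hN : 1 ≤ N) (P : MvPolynomial (Fin 2) ℂ)
    (hhom : P.IsHomogeneous d) (hd : d ≤ m * N) (hq : IsQuasiInv N m P) :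
    (∀ (k : ℕ) (z : ℂ),
      evalZ P (Complex.exp (((2 * Real.pi * k / N : ℝ) : ℂ) * Complex.I) * z) = evalZ P z)
    ∧ (∀ (k : ℕ) (z : ℂ),
      evalZ P (Complex.exp (((2 * Real.pi * k / N : ℝ) : ℂ) * Complex.I) * (starRingEnd ℂ) z)
        = evalZ P z) := by
  have : NeZero N := ⟨by omega⟩
  have hrot {w : ℂ} (hw : w ^ N = 1) (z : ℂ) : evalZ P (w * z) = evalZ P z :=
    evalZ_mul_eq_of_zCoeff_eq_zero (NeZero.ne N) hhom
      (fun _ hb => hq.zCoeff_eq_zero hhom hd hb) hw z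
  have hroot (k : ℕ) : cexp (((2 * π * k / N : ℝ) : ℂ) * I) ^ N = 1 := by
    rw [← exp_nat_mul, ← exp_nat_mul_two_pi_mul_I k]
    have hN' : (N : ℂ) ≠ 0 := Nat.cast_ne_zero.mpr (NeZero.ne N)
    congr 1
    push_cast
    field_simp
  refine ⟨fun k z => hrot (hroot k) z, fun k z => ?_⟩
  rw [hrot (hroot k), evalZ_conj_eq_of_zCoeff_sub_self hhom
    fun _ hb => hq.zCoeff_sub_self hhom hd hb]
end

section
/- Let p be a polynomial on ℝ² and α = (-sin φ₀, cos φ₀) a unit vector. Then the conditions ∂_α^{2s-1} p = 0 on the line (α,x) = 0 for s = 1,…,m hold if and only if in polar coordinates ∂_φ^{2s-1} p = 0 at φ = φ₀ for s = 1,…,m. -/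
/-!
Rotate coordinates by `φ₀`: write `P(u cos φ₀ - v sin φ₀, u sin φ₀ + v cos φ₀) = ∑ₖ Qₖ(u) vᵏ`.
The line `(α, x) = 0` becomes `v = 0` and `∂_α` becomes `∂_v`, so the first family of conditions
says `Q_{2s-1} = 0` for `s ≤ m`. In polar coordinates `∂_φ` acts as the rotation generator
`D = u ∂_v - v ∂_u`, so the second family says `(D^{2s-1} Q)(r, 0) = 0` for `r ≥ 0`, i.e. that the
constant-in-`v` coefficient of `D^{2s-1} Q` vanishes. Once all odd `Qₖ` with `k < n` vanish, that
coefficient of `Dⁿ Q` is `n! uⁿ Qₙ(u)` for odd `n`, so the two families are equivalent by induction.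
-/

open Polynomial
open scoped Polynomial.Bivariate

noncomputable def pf (P : MvPolynomial (Fin 2) ℝ) (x : ℝ × ℝ) : ℝ :=
  MvPolynomial.eval ![x.1, x.2] P

namespace Polynomial

variable {R : Type*} [CommRing R]

theorem evalEval_zero_right (u : R) (Q : R[X][Y]) : Q.evalEval u 0 = (Q.coeff 0).eval u := by
  rw [evalEval, C_0, ← coeff_zero_eq_eval_zero]

theorem evalEval_monomial (x y : R) (n : ℕ) (h : R[X]) :
    (monomial n h).evalEval x y = h.eval x * y ^ n := by
  simp [evalEval, eval_monomial]

noncomputable def derivativeInner (Q : R[X][Y]) : R[X][Y] :=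
  PolynomialModule.equivPolynomialSelf (derivative'.mapCoeffs Q)

theorem coeff_derivativeInner (Q : R[X][Y]) (k : ℕ) :
    (derivativeInner Q).coeff k = derivative (Q.coeff k) :=
  rfl

theorem derivativeInner_monomial (n : ℕ) (h : R[X]) :
    derivativeInner (monomial n h) = monomial n (derivative h) := by
  ext1 k
  rw [coeff_derivativeInner, coeff_monomial, coeff_monomial]
  split_ifs <;> simp

theorem derivativeInner_add (P Q : R[X][Y]) :
    derivativeInner (P + Q) = derivativeInner P + derivativeInner Q := by
  ext1 k
  simp only [coeff_derivativeInner, coeff_add, derivative_add]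

noncomputable def angularDerivative (Q : R[X][Y]) : R[X][Y] :=
  C X * derivative Q - Y * derivativeInner Q

theorem coeff_zero_angularDerivative (Q : R[X][Y]) :
    (angularDerivative Q).coeff 0 = X * Q.coeff 1 := by
  simp [angularDerivative, coeff_derivative]

theorem coeff_succ_angularDerivative (Q : R[X][Y]) (j : ℕ) :
    (angularDerivative Q).coeff (j + 1) =
      X * (Q.coeff (j + 2) * (j + 2 : R[X])) - derivative (Q.coeff j) := by
  rw [angularDerivative, coeff_sub, coeff_C_mul, coeff_derivative, coeff_X_mul,
    coeff_derivativeInner]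
  push_cast
  ring

-- `(j + 1).ascFactorial n = (j + 1) (j + 2) ⋯ (j + n)`
theorem coeff_angularDerivative_iterate {Q : R[X][Y]} {n j : ℕ} (hodd : Odd (n + j))
    (hQ : ∀ k < n + j, Odd k → Q.coeff k = 0) :
    (angularDerivative^[n] Q).coeff j =
      ((j + 1).ascFactorial n : R[X]) * X ^ n * Q.coeff (n + j) := by
  induction n generalizing j with
  | zero => simp
  | succ n ih =>
    have hasc (i : ℕ) : (i + 1).ascFactorial (n + 1) = (i + 1) * (i + 2).ascFactorial n := by
      rw [Nat.succ_ascFactorial, Nat.ascFactorial_succ]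
    have hnext : (angularDerivative^[n] Q).coeff (j + 1) =
        ((j + 2).ascFactorial n : R[X]) * X ^ n * Q.coeff (n + 1 + j) := by
      rw [ih (by convert hodd using 1; ring) (fun k hk => hQ k (by omega)),
        show n + (j + 1) = n + 1 + j by omega]
    rw [Function.iterate_succ_apply']
    cases j with
    | zero =>
      rw [coeff_zero_angularDerivative, hnext, hasc]
      push_cast
      ring
    | succ j =>
      -- the `∂_X` term involves coefficient `j` of the previous iterate, a multiple of the
      -- vanishing odd coefficient `Q.coeff (n + j)`
      have hodd' : Odd (n + j) := by
        rcases hodd with ⟨t, ht⟩; exact ⟨t - 1, by omega⟩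
      have hprev : (angularDerivative^[n] Q).coeff j = 0 := by
        rw [ih hodd' (fun k hk => hQ k (by omega)), hQ (n + j) (by omega) hodd', mul_zero]
      rw [coeff_succ_angularDerivative, hprev, derivative_zero, sub_zero, hnext, hasc]
      push_cast
      ring

theorem forall_odd_coeff_angularDerivative_iterate_eq_zero_iff [IsDomain R] [CharZero R]
    {Q : R[X][Y]} {N : ℕ} :
    (∀ n < N, Odd n → (angularDerivative^[n] Q).coeff 0 = 0) ↔
      ∀ n < N, Odd n → Q.coeff n = 0 := by
  induction N with
  | zero => simp
  | succ N ih =>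
    rw [Nat.forall_lt_succ_right, Nat.forall_lt_succ_right, ih]
    refine and_congr_right fun hlow => imp_congr_right fun hN => ?_
    rw [coeff_angularDerivative_iterate (by simpa using hN)
      (fun k hk => hlow k (by simpa using hk))]
    simp [Nat.factorial_ne_zero, X_ne_zero]

end Polynomial

namespace MvPolynomial

variable {R : Type*} [CommRing R]

noncomputable def rotatedBivariate (a b : R) (P : MvPolynomial (Fin 2) R) : R[X][Y] :=
  aeval ![CC a * Polynomial.C Polynomial.X - CC b * Y,
    CC b * Polynomial.C Polynomial.X + CC a * Y] P

theorem evalEval_rotatedBivariate (a b u v : R) (P : MvPolynomial (Fin 2) R) :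
    (rotatedBivariate a b P).evalEval u v = eval ![u * a - v * b, u * b + v * a] P := by
  rw [← coe_aevalAeval_eq_evalEval, rotatedBivariate, comp_aeval_apply, aeval_eq_eval]
  congr 2
  funext i
  fin_cases i <;> simp <;> ring

end MvPolynomial

section Calculus

variable {𝕜 : Type*} [NontriviallyNormedField 𝕜]

theorem HasDerivAt.evalEval (Q : 𝕜[X][Y]) {f g : 𝕜 → 𝕜} {f' g' x : 𝕜}
    (hf : HasDerivAt f f' x) (hg : HasDerivAt g g' x) :
    HasDerivAt (fun t => Q.evalEval (f t) (g t))
      ((derivativeInner Q).evalEval (f x) (g x) * f' + (derivative Q).evalEval (f x) (g x) * g')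
      x := by
  induction Q using Polynomial.induction_on' with
  | add P Q hP hQ =>
    simp only [evalEval_add]
    refine (hP.add hQ).congr_deriv ?_
    rw [derivativeInner_add, derivative_add, evalEval_add, evalEval_add]
    ring
  | monomial n h =>
    simp only [evalEval_monomial]
    refine (((h.hasDerivAt (f x)).comp x hf).mul (hg.pow n)).congr_deriv ?_
    rw [derivativeInner_monomial, derivative_monomial, evalEval_monomial, evalEval_monomial]
    simp only [Pi.pow_apply, Function.comp_apply, eval_mul, eval_natCast]
    ring

theorem iteratedDeriv_evalEval_snd (Q : 𝕜[X][Y]) (u : 𝕜) (n : ℕ) :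
    iteratedDeriv n (fun t => Q.evalEval u t) = fun t => (derivative^[n] Q).evalEval u t := by
  induction n with
  | zero => simp
  | succ n ih =>
    funext t
    rw [iteratedDeriv_succ, ih, Function.iterate_succ_apply',
      ((hasDerivAt_const t u).evalEval _ (hasDerivAt_id' t)).deriv]
    simp

end Calculus

theorem iteratedDeriv_evalEval_polar (Q : ℝ[X][Y]) (r : ℝ) (n : ℕ) :
    iteratedDeriv n (fun θ => Q.evalEval (r * Real.cos θ) (r * Real.sin θ)) =
      fun θ => (angularDerivative^[n] Q).evalEval (r * Real.cos θ) (r * Real.sin θ) := by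
  induction n with
  | zero => simp
  | succ n ih =>
    funext θ
    have hcos : HasDerivAt (fun θ => r * Real.cos θ) (-(r * Real.sin θ)) θ := by
      simpa using (Real.hasDerivAt_cos θ).const_mul r
    have hsin : HasDerivAt (fun θ => r * Real.sin θ) (r * Real.cos θ) θ :=
      (Real.hasDerivAt_sin θ).const_mul r
    rw [iteratedDeriv_succ, ih, Function.iterate_succ_apply', (hcos.evalEval _ hsin).deriv]
    simp only [angularDerivative, evalEval_sub, evalEval_mul, evalEval_C, eval_X, evalEval_X]
    ring

section PolarCoordinates

open Real

variable (P : MvPolynomial (Fin 2) ℝ) (φ₀ : ℝ)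

theorem pf_eq_evalEval_rotatedBivariate (u v : ℝ) :
    pf P (u * cos φ₀ - v * sin φ₀, u * sin φ₀ + v * cos φ₀) =
      (P.rotatedBivariate (cos φ₀) (sin φ₀)).evalEval u v := by
  rw [MvPolynomial.evalEval_rotatedBivariate, pf]

theorem iteratedDeriv_pf_normal {x : ℝ × ℝ} (hx : -sin φ₀ * x.1 + cos φ₀ * x.2 = 0) (n : ℕ) :
    iteratedDeriv n (fun t => pf P (x.1 + t * -sin φ₀, x.2 + t * cos φ₀)) 0 =
      n.factorial *
        ((P.rotatedBivariate (cos φ₀) (sin φ₀)).coeff n).eval (cos φ₀ * x.1 + sin φ₀ * x.2) := by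
  have hline (t : ℝ) : (x.1 + t * -sin φ₀, x.2 + t * cos φ₀) =
      ((cos φ₀ * x.1 + sin φ₀ * x.2) * cos φ₀ - t * sin φ₀,
        (cos φ₀ * x.1 + sin φ₀ * x.2) * sin φ₀ + t * cos φ₀) := by
    ext
    · linear_combination (-x.1) * sin_sq_add_cos_sq φ₀ - sin φ₀ * hx
    · linear_combination (-x.2) * sin_sq_add_cos_sq φ₀ + cos φ₀ * hx
  simp_rw [hline, pf_eq_evalEval_rotatedBivariate]
  rw [iteratedDeriv_evalEval_snd]
  simp [evalEval_zero_right, coeff_iterate_derivative, Nat.descFactorial_self]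

theorem iteratedDeriv_pf_polar (r : ℝ) (n : ℕ) :
    iteratedDeriv n (fun φ => pf P (r * cos φ, r * sin φ)) φ₀ =
      ((angularDerivative^[n] (P.rotatedBivariate (cos φ₀) (sin φ₀))).coeff 0).eval r := by
  have hcircle (φ : ℝ) : (r * cos φ, r * sin φ) =
      (r * cos (φ - φ₀) * cos φ₀ - r * sin (φ - φ₀) * sin φ₀,
        r * cos (φ - φ₀) * sin φ₀ + r * sin (φ - φ₀) * cos φ₀) := by
    ext
    · rw [cos_sub, sin_sub]; linear_combination (-(r * cos φ)) * sin_sq_add_cos_sq φ₀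
    · rw [cos_sub, sin_sub]; linear_combination (-(r * sin φ)) * sin_sq_add_cos_sq φ₀
  simp_rw [hcircle, pf_eq_evalEval_rotatedBivariate]
  rw [iteratedDeriv_comp_sub_const (f := fun θ => evalEval (r * cos θ) (r * sin θ) _),
    iteratedDeriv_evalEval_polar]
  simp [evalEval_zero_right]

theorem forall_iteratedDeriv_pf_normal_eq_zero_iff (n : ℕ) :
    (∀ x : ℝ × ℝ, -sin φ₀ * x.1 + cos φ₀ * x.2 = 0 →
      iteratedDeriv n (fun t => pf P (x.1 + t * -sin φ₀, x.2 + t * cos φ₀)) 0 = 0) ↔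
      (P.rotatedBivariate (cos φ₀) (sin φ₀)).coeff n = 0 := by
  refine ⟨fun h => Polynomial.funext fun ρ => ?_, fun h x hx => ?_⟩
  · have hx : -sin φ₀ * (ρ * cos φ₀) + cos φ₀ * (ρ * sin φ₀) = 0 := by ring
    have hρ : cos φ₀ * (ρ * cos φ₀) + sin φ₀ * (ρ * sin φ₀) = ρ := by
      linear_combination ρ * cos_sq_add_sin_sq φ₀
    have := h (ρ * cos φ₀, ρ * sin φ₀) hx
    rw [iteratedDeriv_pf_normal P φ₀ hx, hρ] at this
    simpa [Nat.factorial_ne_zero] using this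
  · rw [iteratedDeriv_pf_normal P φ₀ hx, h, eval_zero, mul_zero]

theorem forall_iteratedDeriv_pf_polar_eq_zero_iff (n : ℕ) :
    (∀ r : ℝ, 0 ≤ r → iteratedDeriv n (fun φ => pf P (r * cos φ, r * sin φ)) φ₀ = 0) ↔
      (angularDerivative^[n] (P.rotatedBivariate (cos φ₀) (sin φ₀))).coeff 0 = 0 := by
  simp_rw [iteratedDeriv_pf_polar]
  refine ⟨fun h => eq_zero_of_infinite_isRoot _ ((Set.Ici_infinite 0).mono h), ?_⟩
  intro h r _
  rw [h, eval_zero]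

end PolarCoordinates

theorem forall_two_mul_sub_one_iff_forall_odd_lt {p : ℕ → Prop} {m : ℕ} :
    (∀ s, 1 ≤ s → s ≤ m → p (2 * s - 1)) ↔ ∀ n < 2 * m, Odd n → p n := by
  refine ⟨fun h n hn ⟨k, hk⟩ => ?_, fun h s hs hsm => h _ (by omega) ⟨s - 1, by omega⟩⟩
  have := h (k + 1) (by omega) (by omega)
  rwa [show 2 * (k + 1) - 1 = n by omega] at this

/-- For `α = (-sin φ₀, cos φ₀)`, the odd normal derivatives `∂_α^{2s-1} p`, `s = 1,…,m`,
vanish on the line `(α,x)=0` iff the odd angular derivatives `∂_φ^{2s-1} p` vanish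
at `φ = φ₀` in polar coordinates. -/
theorem stmt1 (P : MvPolynomial (Fin 2) ℝ) (m : ℕ) (φ₀ : ℝ) :
    (∀ x : ℝ × ℝ, (-Real.sin φ₀) * x.1 + Real.cos φ₀ * x.2 = 0 →
      ∀ s : ℕ, 1 ≤ s → s ≤ m →
        iteratedDeriv (2*s-1)
          (fun t : ℝ => pf P (x.1 + t * (-Real.sin φ₀), x.2 + t * Real.cos φ₀)) 0 = 0)
    ↔ (∀ r : ℝ, 0 ≤ r → ∀ s : ℕ, 1 ≤ s → s ≤ m →
        iteratedDeriv (2*s-1)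
          (fun φ : ℝ => pf P (r * Real.cos φ, r * Real.sin φ)) φ₀ = 0) := by
  set Q := P.rotatedBivariate (Real.cos φ₀) (Real.sin φ₀)
  calc _ ↔ ∀ s, 1 ≤ s → s ≤ m → Q.coeff (2 * s - 1) = 0 := by
        simp only [Q, ← forall_iteratedDeriv_pf_normal_eq_zero_iff]
        exact ⟨fun h s hs hsm x hx => h x hx s hs hsm, fun h x hx s hs hsm => h s hs hsm x hx⟩
    _ ↔ ∀ n < 2 * m, Odd n → Q.coeff n = 0 :=
        forall_two_mul_sub_one_iff_forall_odd_lt (p := fun n => Q.coeff n = 0)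
    _ ↔ ∀ n < 2 * m, Odd n → (angularDerivative^[n] Q).coeff 0 = 0 :=
        forall_odd_coeff_angularDerivative_iterate_eq_zero_iff.symm
    _ ↔ ∀ s, 1 ≤ s → s ≤ m → (angularDerivative^[2 * s - 1] Q).coeff 0 = 0 :=
        (forall_two_mul_sub_one_iff_forall_odd_lt
          (p := fun n => (angularDerivative^[n] Q).coeff 0 = 0)).symm
    _ ↔ _ := by
        simp only [Q, ← forall_iteratedDeriv_pf_polar_eq_zero_iff]
        exact ⟨fun h r hr s hs hsm => h s hs hsm r hr, fun h s hs hsm r hr => h r hr s hs hsm⟩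
end

section
/- The m-discriminant w_m = Π_{α∈A} (α,x)^{2m_α+1} is an m-quasiinvariant: for each α ∈ A, ∂_α^{2s-1} w_m vanishes on the hyperplane (α,x) = 0 for s = 1,…,m_α. -/
open Finset

noncomputable def evalV {n : ℕ} (P : MvPolynomial (Fin n) ℝ)
    (x : EuclideanSpace ℝ (Fin n)) : ℝ :=
  MvPolynomial.eval (fun i => x i) P

def dotp {n : ℕ} (a x : EuclideanSpace ℝ (Fin n)) : ℝ := ∑ i, a i * x i

noncomputable def linForm {n : ℕ} (α : EuclideanSpace ℝ (Fin n)) :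
    MvPolynomial (Fin n) ℝ :=
  ∑ i, MvPolynomial.C (α i) * MvPolynomial.X i

/-- The `m`-discriminant `w_m = Π_{α∈A} (α,x)^{2m_α+1}`. -/
noncomputable def wpoly {n : ℕ} (A : Finset (EuclideanSpace ℝ (Fin n)))
    (m : EuclideanSpace ℝ (Fin n) → ℕ) : MvPolynomial (Fin n) ℝ :=
  ∏ α ∈ A, (linForm α) ^ (2 * m α + 1)

lemma evalV_linForm {n : ℕ} (β y : EuclideanSpace ℝ (Fin n)) :
    evalV (linForm β) y = dotp β y := by
  simp [evalV, linForm, dotp]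

lemma dotp_add_smul {n : ℕ} (β x α : EuclideanSpace ℝ (Fin n)) (t : ℝ) :
    dotp β (x + t • α) = dotp β x + t * dotp β α := by
  simp only [dotp, PiLp.add_apply, PiLp.smul_apply, smul_eq_mul, mul_add,
    Finset.sum_add_distrib, Finset.mul_sum]
  congr 1
  exact Finset.sum_congr rfl (fun i _ => by ring)

lemma iteratedDeriv_polyEval (k : ℕ) (p : Polynomial ℝ) :
    iteratedDeriv k (fun t : ℝ => p.eval t) =
      fun t => (Polynomial.derivative^[k] p).eval t := by
  induction k with
  | zero => simp
  | succ k ih =>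
    rw [iteratedDeriv_succ, ih]
    funext t
    rw [Function.iterate_succ_apply']
    exact Polynomial.deriv (p := Polynomial.derivative^[k] p)

/-- The `m`-discriminant is an `m`-quasiinvariant: for each `α ∈ A`, the odd normal
derivatives `∂_α^{2s-1} w_m` vanish on `(α,x)=0` for `s = 1,…,m_α`. -/
theorem stmt5 {n : ℕ} (A : Finset (EuclideanSpace ℝ (Fin n)))
    (m : EuclideanSpace ℝ (Fin n) → ℕ)
    (hA : ∀ α ∈ A, α ≠ 0) :
    ∀ α ∈ A, ∀ x, dotp α x = 0 → ∀ s : ℕ, 1 ≤ s → s ≤ m α →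
      iteratedDeriv (2*s-1) (fun t : ℝ => evalV (wpoly A m) (x + t • α)) 0 = 0 := by
  intro α hα x hx s hs1 hs2
  set P : Polynomial ℝ :=
    ∏ β ∈ A, (Polynomial.C (dotp β x) + Polynomial.C (dotp β α) * Polynomial.X)
      ^ (2 * m β + 1) with hP
  have hfun : (fun t : ℝ => evalV (wpoly A m) (x + t • α)) = fun t => P.eval t := by
    funext t
    simp only [evalV, wpoly, hP, map_prod, map_pow, Polynomial.eval_prod,
      Polynomial.eval_pow, Polynomial.eval_add, Polynomial.eval_mul,
      Polynomial.eval_C, Polynomial.eval_X]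
    refine Finset.prod_congr rfl (fun β _ => ?_)
    congr 1
    have := evalV_linForm β (x + t • α)
    rw [evalV] at this
    rw [this, dotp_add_smul, mul_comm t]
  have hdvd : Polynomial.X ^ (2 * m α + 1) ∣ P := by
    refine dvd_trans ?_ (Finset.dvd_prod_of_mem _ hα)
    rw [hx]
    exact pow_dvd_pow_of_dvd (by simp) _
  rw [hfun, iteratedDeriv_polyEval]
  have h2 : (1:ℕ) ≤ 2 * m α + 1 - (2*s-1) := by omega
  obtain ⟨q, hq⟩ := dvd_trans (dvd_pow_self Polynomial.X (by omega : 2 * m α + 1 - (2*s-1) ≠ 0))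
    (Polynomial.pow_sub_dvd_iterate_derivative_of_pow_dvd (2*s-1) hdvd)
  rw [hq]
  simp
end

section
/- For m = 0 and the dihedral group I_2(N), the Macdonald-type identity holds: (Π_{k=0}^{N-1} ∂_{α_k}) (Π_{k=0}^{N-1} (α_k, x)) = N!/2^{N−1}, where α_k = (−sin(πk/N), cos(πk/N)). -/
/-!
Identify `ℝ²` with `ℂ` via `z = y₁ + i y₂`. Then `(α_k, y) = Im (e^{-iπk/N} z)`, and since the
`e^{2πik/N}` are the `N`-th roots of unity, `∏_k (α_k, y) = (-1/2)^{N-1} Im (z^N)`.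
Differentiating `Im (c z^n)` along `v` gives `Im (c n z^{n-1} v)`, and `α_k` corresponds to
`i e^{iπk/N}`, so the `N` derivatives leave the constant
`Im ((-1/2)^{N-1} N! ∏_k i e^{iπk/N}) = Im ((-1/2)^{N-1} N! i^{2N-1}) = N!/2^{N-1}`.
-/

open Finset Complex ComplexConjugate

theorem IsPrimitiveRoot.pow_sub_pow_eq_prod_range_sub_pow_mul {R : Type*} [CommRing R]
    [IsDomain R] {ζ : R} {n : ℕ} (hζ : IsPrimitiveRoot ζ n) (hn : 0 < n) (x y : R) :
    x ^ n - y ^ n = ∏ k ∈ range n, (x - ζ ^ k * y) := by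
  simpa [Polynomial.eval_prod] using
    congrArg (Polynomial.eval x) (X_pow_sub_C_eq_prod hζ hn (α := y) rfl)

section DirectionalDerivatives

variable {E ι : Type*} [NormedAddCommGroup E] [NormedSpace ℝ E]

theorem fderiv_im_mul_pow_apply (L : E →L[ℝ] ℂ) (c : ℂ) (n : ℕ) (y v : E) :
    fderiv ℝ (fun y => (c * L y ^ n).im) y v = (c * n * L y ^ (n - 1) * L v).im := by
  have hpow : HasDerivAt (fun w : ℂ => c * w ^ n) (c * (n * L y ^ (n - 1))) (L y) :=
    (hasDerivAt_pow n _).const_mul c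
  have h := imCLM.hasFDerivAt.comp y (hpow.comp_hasFDerivAt y L.hasFDerivAt)
  rw [show (fun y => (c * L y ^ n).im) = imCLM ∘ (fun w : ℂ => c * w ^ n) ∘ L from rfl,
    h.fderiv]
  simp only [ContinuousLinearMap.coe_comp, Function.comp_apply, FunLike.coe_smul, Pi.smul_apply,
    imCLM_apply, smul_eq_mul]
  ring_nf

theorem foldr_fderiv_im_mul_pow (L : E →L[ℝ] ℂ) (v : ι → E) (c : ℂ) (n : ℕ) (l : List ι) :
    l.foldr (fun i g y => fderiv ℝ g y (v i)) (fun y => (c * L y ^ n).im) =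
      fun y => (c * n.descFactorial l.length * (l.map fun i => L (v i)).prod *
        L y ^ (n - l.length)).im := by
  induction l with
  | nil => simp
  | cons i l ih =>
    funext y
    rw [List.foldr_cons, ih, fderiv_im_mul_pow_apply]
    simp only [List.length_cons, List.map_cons, List.prod_cons, Nat.descFactorial_succ,
      Nat.cast_mul, Nat.sub_sub]
    ring_nf

end DirectionalDerivatives

theorem prod_exp_pi_mul_div_mul_I {N : ℕ} (hN : N ≠ 0) :
    ∏ k ∈ range N, exp (↑(Real.pi * k / N) * I) = I ^ (N - 1) := by
  have hsum : (∑ k ∈ range N, (k : ℂ)) * 2 = N * ((N - 1 : ℕ) : ℂ) := by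
    rw [← Nat.cast_sum]
    exact_mod_cast sum_range_id_mul_two N
  have hangle :
      ∑ k ∈ range N, (↑(Real.pi * k / N) * I : ℂ) = (N - 1 : ℕ) * (Real.pi / 2 * I) := by
    have hN' : (N : ℂ) ≠ 0 := Nat.cast_ne_zero.mpr hN
    push_cast
    rw [← sum_mul, ← sum_div, ← mul_sum]
    field_simp
    linear_combination hsum
  rw [← exp_sum, hangle, exp_nat_mul, exp_pi_div_two_mul_I]

theorem neg_sin_mul_add_cos_mul_eq_im (θ : ℝ) (y : ℝ × ℝ) :
    -Real.sin θ * y.1 + Real.cos θ * y.2 = (exp (-(θ * I)) * equivRealProdCLM.symm y).im := by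
  rw [show -(θ * I) = ((-θ : ℝ) : ℂ) * I by push_cast; ring, mul_im, exp_ofReal_mul_I_re,
    exp_ofReal_mul_I_im, equivRealProdCLM_symm_apply]
  simp only [Real.cos_neg, Real.sin_neg, add_re, ofReal_re, mul_re, I_re, mul_zero, ofReal_im,
    I_im, mul_one, sub_self, add_zero, add_im, mul_im, zero_add]
  ring

theorem equivRealProdCLM_symm_neg_sin_cos (θ : ℝ) :
    equivRealProdCLM.symm (-Real.sin θ, Real.cos θ) = I * exp (θ * I) := by
  rw [exp_mul_I, equivRealProdCLM_symm_apply]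
  push_cast
  linear_combination (-Complex.sin θ) * I_sq

theorem prod_im_exp_neg_pi_mul_div_mul_I_mul {N : ℕ} (hN : N ≠ 0) (z : ℂ) :
    ∏ k ∈ range N, (exp (-(↑(Real.pi * k / N) * I)) * z).im =
      (-1 / 2) ^ (N - 1) * (z ^ N).im := by
  set ζ := exp (2 * Real.pi * I / N)
  have hfactor : ∀ k ∈ range N, ((exp (-(↑(Real.pi * k / N) * I)) * z).im : ℂ) =
      exp (-(↑(Real.pi * k / N) * I)) * (z - ζ ^ k * conj z) / (2 * I) := by
    intro k _
    have hζk : ζ ^ k = exp (↑(Real.pi * k / N) * I) / exp (-(↑(Real.pi * k / N) * I)) := by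
      rw [← exp_sub, ← exp_nat_mul]
      congr 1
      push_cast
      ring
    rw [im_eq_sub_conj, map_mul, ← exp_conj, hζk]
    simp only [map_neg, map_mul, conj_ofReal, conj_I]
    field_simp
  apply ofReal_injective
  rw [ofReal_prod, prod_congr rfl hfactor, prod_div_distrib, prod_mul_distrib,
    ← (isPrimitiveRoot_exp N hN).pow_sub_pow_eq_prod_range_sub_pow_mul (Nat.pos_of_ne_zero hN),
    prod_const, card_range, ← map_pow]
  simp only [exp_neg, prod_inv_distrib, prod_exp_pi_mul_div_mul_I hN]
  obtain ⟨M, rfl⟩ := Nat.exists_eq_add_one_of_ne_zero hN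
  rw [ofReal_mul, im_eq_sub_conj, Nat.add_sub_cancel]
  push_cast
  have hscalar : (-I) ^ M / (2 * I) ^ M = (-1 / 2) ^ M := by
    rw [← div_pow]
    congr 1
    field_simp
  rw [← inv_pow, inv_I, pow_succ _ M, ← hscalar]
  ring

theorem neg_half_pow_mul_I_pow_mul_I_pow_pred {N : ℕ} (hN : N ≠ 0) :
    (-1 / 2 : ℂ) ^ (N - 1) * (I ^ N * I ^ (N - 1)) = I / 2 ^ (N - 1) := by
  obtain ⟨M, rfl⟩ := Nat.exists_eq_add_one_of_ne_zero hN
  rw [Nat.add_sub_cancel, pow_succ, mul_right_comm, ← mul_pow, I_mul_I, ← mul_assoc, ← mul_pow]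
  norm_num
  rw [one_div, inv_pow, mul_comm, div_eq_mul_inv]

/-- Macdonald-type identity for `I₂(N)`:
`(Π_k ∂_{α_k}) (Π_k (α_k, x)) = N! / 2^{N-1}`, with `α_k = (−sin(πk/N), cos(πk/N))`. -/
theorem stmt10 (N : ℕ) (hN : 1 ≤ N) :
    ∀ x : ℝ × ℝ,
      ((List.range N).foldr
        (fun k g => fun y : ℝ × ℝ =>
          fderiv ℝ g y (-Real.sin (Real.pi * k / N), Real.cos (Real.pi * k / N)))
        (fun y : ℝ × ℝ =>
          ∏ k ∈ range N,
            ((-Real.sin (Real.pi * k / N)) * y.1 + Real.cos (Real.pi * k / N) * y.2))) x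
      = (Nat.factorial N : ℝ) / 2^(N-1) := by
  intro x
  have hN0 : N ≠ 0 := Nat.one_le_iff_ne_zero.mp hN
  have hprod : (fun y : ℝ × ℝ => ∏ k ∈ range N,
      ((-Real.sin (Real.pi * k / N)) * y.1 + Real.cos (Real.pi * k / N) * y.2)) =
      fun y => ((((-1 / 2 : ℝ) ^ (N - 1) : ℝ) : ℂ) *
        (equivRealProdCLM.symm : ℝ × ℝ →L[ℝ] ℂ) y ^ N).im := by
    funext y
    simp only [neg_sin_mul_add_cos_mul_eq_im, ContinuousLinearEquiv.coe_coe]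
    rw [im_ofReal_mul, prod_im_exp_neg_pi_mul_div_mul_I_mul hN0]
  -- the `List.range N` of the statement is coerced to `List ℝ` through the list monad
  have hlist : ((List.range N : List ℕ) : List ℝ) = (List.range N).map Nat.cast :=
    List.flatMap_pure_eq_map _ _
  rw [hprod, foldr_fderiv_im_mul_pow, hlist, List.map_map, List.length_map, List.length_range,
    ← List.prod_toFinset _ List.nodup_range, List.toFinset_range]
  simp only [Function.comp_apply, ContinuousLinearEquiv.coe_coe, equivRealProdCLM_symm_neg_sin_cos]
  rw [prod_mul_distrib, prod_const, card_range, prod_exp_pi_mul_div_mul_I hN0,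
    Nat.descFactorial_self, Nat.sub_self, pow_zero, mul_one, mul_right_comm]
  push_cast
  rw [neg_half_pow_mul_I_pow_mul_I_pow_pred hN0, ← ofReal_natCast, im_mul_ofReal, ← ofReal_ofNat,
    ← ofReal_pow, div_ofReal_im, I_im]
  ring
end

section
/- For each j with 1 ≤ j ≤ N−1 and each m ≥ 0, the (m+1)×(m+1) linear system Σ_{t=0}^{m} ((m−2t)N + j)^{2s−1} a_t = 0, s = 1,…,m, has solution space of dimension exactly 1. -/
/-!
Write `y_t = (m - 2t)N + j`. Deleting the last column leaves the square matrix `(y_t ^ (2s+1))`,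
which factors as `Vᵀ · diag(y)` with `V` the Vandermonde matrix of the `y_t ^ 2`. As `0 < j < N`,
no `kN + j` vanishes: so every `y_t` is nonzero, and `y_t ^ 2 = y_u ^ 2` forces `t = u` because
`y_t + y_u = 2((m - t - u)N + j)`. Hence that minor is invertible, the rank is `m`, and the
kernel is a line by rank–nullity.
-/

open Function Matrix Module

namespace Matrix

variable {K : Type*} [Field K]

theorem rank_add_finrank_ker_mulVecLin {m n : Type*} [Fintype n]
    (A : Matrix m n K) : A.rank + finrank K (LinearMap.ker A.mulVecLin) = Fintype.card n := by
  rw [rank, LinearMap.finrank_range_add_finrank_ker, finrank_fintype_fun_eq_card]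

theorem of_pow_two_mul_add_one_eq {R : Type*} [CommRing R] {n : ℕ} (v : Fin n → R) :
    (of fun i j : Fin n => v j ^ (2 * (i : ℕ) + 1)) =
      (vandermonde fun j => v j ^ 2)ᵀ * diagonal v := by
  ext i j
  simp [mul_diagonal, pow_succ, pow_mul]

theorem det_of_pow_two_mul_add_one_ne_zero {R : Type*} [CommRing R] [IsDomain R] {n : ℕ}
    {v : Fin n → R} (hv : ∀ i, v i ≠ 0) (hv2 : Injective fun i => v i ^ 2) :
    (of fun i j : Fin n => v j ^ (2 * (i : ℕ) + 1)).det ≠ 0 := by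
  rw [of_pow_two_mul_add_one_eq, det_mul, det_transpose, det_diagonal]
  exact mul_ne_zero (det_vandermonde_ne_zero_iff.mpr hv2)
    (Finset.prod_ne_zero_iff.mpr fun i _ => hv i)

theorem finrank_ker_of_pow_two_mul_add_one {m : ℕ} {v : Fin (m + 1) → K} (hv : ∀ i, v i ≠ 0)
    (hv2 : Injective fun i => v i ^ 2) :
    finrank K (LinearMap.ker
      (of fun (i : Fin m) (j : Fin (m + 1)) => v j ^ (2 * (i : ℕ) + 1)).mulVecLin) = 1 := by
  set A : Matrix (Fin m) (Fin (m + 1)) K := of fun i j => v j ^ (2 * (i : ℕ) + 1)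
  have hdet : (A.submatrix id Fin.castSucc).det ≠ 0 :=
    det_of_pow_two_mul_add_one_ne_zero (fun i => hv _) (hv2.comp (Fin.castSucc_injective m))
  have hrank : A.rank = m := le_antisymm (by simpa using A.rank_le_card_height)
    (by simpa using (rank_of_det_ne_zero hdet).symm.trans_le (A.rank_submatrix_le id Fin.castSucc))
  have := A.rank_add_finrank_ker_mulVecLin
  rw [hrank, Fintype.card_fin] at this
  omega

end Matrix

theorem Int.mul_add_ne_zero_of_pos_of_lt {n r : ℤ} (hr : 0 < r) (hrn : r < n) (k : ℤ) :
    k * n + r ≠ 0 := fun h => by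
  have := Int.le_of_dvd hr (⟨-k, by linear_combination h⟩ : n ∣ r)
  omega

theorem injective_sq_sub_two_mul_mul_add {n r : ℤ} (hr : 0 < r) (hrn : r < n) (m : ℤ) :
    Injective fun t : ℕ => ((m - 2 * t) * n + r) ^ 2 := by
  intro t u h
  have hfac : (2 * ((u : ℤ) - t) * n) * (2 * ((m - t - u) * n + r)) = 0 := by
    linear_combination h
  rcases mul_eq_zero.mp hfac with hdiff | hsum
  · have := mul_eq_zero.mp hdiff
    omega
  · exact absurd (by linarith) (Int.mul_add_ne_zero_of_pos_of_lt hr hrn (m - t - u))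

theorem stmt12_general (N m j : ℕ) (hj1 : 1 ≤ j) (hj2 : j ≤ N - 1) :
    Module.finrank ℚ
      (LinearMap.ker (Matrix.mulVecLin
        (Matrix.of fun (s : Fin m) (t : Fin (m+1)) =>
          (((((m:ℤ) - 2 * (t:ℕ)) * N + j : ℤ)) : ℚ)^(2*((s:ℕ)+1)-1)))) = 1 := by
  have hj : (0 : ℤ) < j := by exact_mod_cast hj1
  have hjN : (j : ℤ) < N := by omega
  have key := finrank_ker_of_pow_two_mul_add_one
    (v := fun t : Fin (m + 1) => ((((m : ℤ) - 2 * (t : ℕ)) * N + j : ℤ) : ℚ))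
    (fun t => Int.cast_ne_zero.mpr (Int.mul_add_ne_zero_of_pos_of_lt hj hjN _))
    (fun t u h => Fin.ext <| injective_sq_sub_two_mul_mul_add hj hjN m <|
      Int.cast_injective (α := ℚ) (by simpa using h))
  have hexp : (of fun (s : Fin m) (t : Fin (m + 1)) =>
      ((((m : ℤ) - 2 * (t : ℕ)) * N + j : ℤ) : ℚ) ^ (2 * ((s : ℕ) + 1) - 1)) =
      of fun (s : Fin m) (t : Fin (m + 1)) =>
        ((((m : ℤ) - 2 * (t : ℕ)) * N + j : ℤ) : ℚ) ^ (2 * (s : ℕ) + 1) := by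
    ext s t
    simp only [of_apply, show 2 * ((s : ℕ) + 1) - 1 = 2 * s + 1 by omega]
  rw [hexp]
  exact key

/-- The `m × (m+1)` matrix with entries `((m−2t)N + j)^{2s−1}` (rows `s = 1,…,m`,
columns `t = 0,…,m`) has a one-dimensional kernel, i.e. rank `m`. -/
theorem stmt12 (N m j : ℕ) (hN : 2 ≤ N) (hj1 : 1 ≤ j) (hj2 : j ≤ N - 1) :
    Module.finrank ℚ
      (LinearMap.ker (Matrix.mulVecLin
        (Matrix.of fun (s : Fin m) (t : Fin (m+1)) =>
          (((((m:ℤ) - 2 * (t:ℕ)) * N + j : ℤ)) : ℚ)^(2*((s:ℕ)+1)-1)))) = 1 :=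
  stmt12_general N m j hj1 hj2
end

section
/- For the dihedral group I_2(N) with constant multiplicity m, the operator L = Δ − 2m Σ_{k=0}^{N−1} ∂_{α_k}/(α_k, x) annihilates each basic quasiinvariant q_j and q̄_j, j = 1,…,N−1; i.e. these polynomials are m-harmonic. -/
open Finset

/-- `z = x₁ + i x₂`. -/
noncomputable def zOf (x : ℝ × ℝ) : ℂ := (x.1 : ℂ) + (x.2 : ℂ) * Complex.I

/-- `q_j = Σ_t a_t z̄^{tN} z^{(m−t)N+j}` as a function on ℝ². -/
noncomputable def qj (N m j : ℕ) (a : Fin (m+1) → ℂ) (x : ℝ × ℝ) : ℂ :=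
  ∑ t : Fin (m+1),
    a t * ((starRingEnd ℂ) (zOf x)) ^ ((t:ℕ) * N) * (zOf x) ^ ((m - (t:ℕ)) * N + j)

/-- `q̄_j`, the complex conjugate of `q_j`. -/
noncomputable def qbarj (N m j : ℕ) (a : Fin (m+1) → ℂ) (x : ℝ × ℝ) : ℂ :=
  ∑ t : Fin (m+1),
    (starRingEnd ℂ) (a t) * (zOf x) ^ ((t:ℕ) * N)
      * ((starRingEnd ℂ) (zOf x)) ^ ((m - (t:ℕ)) * N + j)

/-- The gauged Calogero–Moser operator `L = Δ − 2m Σ_k ∂_{α_k}/(α_k, x)` of `I₂(N)`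
acting on ℂ-valued functions on ℝ². -/
noncomputable def LopC (N m : ℕ) (f : ℝ × ℝ → ℂ) (x : ℝ × ℝ) : ℂ :=
  (fderiv ℝ (fun y => fderiv ℝ f y ((1:ℝ), (0:ℝ))) x ((1:ℝ), (0:ℝ)) +
   fderiv ℝ (fun y => fderiv ℝ f y ((0:ℝ), (1:ℝ))) x ((0:ℝ), (1:ℝ)))
  - 2 * m * ∑ k ∈ range N,
      (fderiv ℝ f x (-Real.sin (Real.pi * k / N), Real.cos (Real.pi * k / N)))
      / ((((-Real.sin (Real.pi * k / N)) * x.1 + Real.cos (Real.pi * k / N) * x.2 : ℝ)) : ℂ)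
/-!
In the coordinates `z`, `z̄` the Laplacian is `4 ∂_z ∂_z̄`, and
`2i e^{iθ} (α, x) = z - e^{2iθ} z̄` for `α = (-sin θ, cos θ)`. With `θ = πk/N` the singular part
of `L` becomes a sum of partial fractions over the `N`-th roots of unity `ζ^k`, which add up to
logarithmic derivatives of `z^N - z̄^N`. For a monomial this gives
`z z̄ (z^N - z̄^N) L(z̄^p z^q) = 4 z̄^p z^q (p (q - mN) z^N + q (mN - p) z̄^N)`.
For `q_j` the right-hand side telescopes in `t` and vanishes as soon as
`(t+1)N (j - (t+1)N) a_{t+1} + ((m-t)N + j)(m-t)N a_t = 0`.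
With `λ_t = (m - 2t)N + j` the linear system says `∑_t P(λ_t²) λ_t a_t = 0` for every
polynomial `P` of degree `< m`; taking `P` to vanish at the `λ_r²`, `r ≠ t, t+1`, leaves two
terms whose coefficients are products that telescope to this recurrence. Since `L` has real
coefficients, `L q̄_j` is the conjugate of `L q_j`.
-/

open ComplexConjugate

section RootsOfUnity

open Polynomial

namespace IsPrimitiveRoot

variable {N : ℕ} {ζ : ℂ}

theorem pow_sub_pow_eq_prod (hζ : IsPrimitiveRoot ζ N) (hN : 0 < N) (z w : ℂ) :
    z ^ N - w ^ N = ∏ k ∈ range N, (z - ζ ^ k * w) := by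
  simpa [eval_prod] using congrArg (eval z) (X_pow_sub_C_eq_prod hζ hN (rfl : w ^ N = w ^ N))

theorem sum_inv_sub_pow_mul (hζ : IsPrimitiveRoot ζ N) (hN : 0 < N) {z w : ℂ}
    (hne : ∀ k ∈ range N, z - ζ ^ k * w ≠ 0) :
    ∑ k ∈ range N, (z - ζ ^ k * w)⁻¹ = N * z ^ (N - 1) / (z ^ N - w ^ N) := by
  calc ∑ k ∈ range N, (z - ζ ^ k * w)⁻¹
      = ∑ k ∈ range N, logDeriv (fun u => u - ζ ^ k * w) z := by simp [logDeriv_apply]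
    _ = logDeriv (fun u => ∏ k ∈ range N, (u - ζ ^ k * w)) z :=
      (logDeriv_prod hne fun _ _ => by fun_prop).symm
    _ = N * z ^ (N - 1) / (z ^ N - w ^ N) := by
      simp_rw [← hζ.pow_sub_pow_eq_prod hN]
      simp [logDeriv_apply]

theorem sum_pow_mul_inv_sub_pow_mul (hζ : IsPrimitiveRoot ζ N) (hN : 0 < N) {z w : ℂ}
    (hne : ∀ k ∈ range N, z - ζ ^ k * w ≠ 0) :
    ∑ k ∈ range N, ζ ^ k * (z - ζ ^ k * w)⁻¹ = N * w ^ (N - 1) / (z ^ N - w ^ N) := by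
  have h :
      ∑ k ∈ range N, -ζ ^ k * (z - ζ ^ k * w)⁻¹ = -(N * w ^ (N - 1) / (z ^ N - w ^ N)) :=
    calc ∑ k ∈ range N, -ζ ^ k * (z - ζ ^ k * w)⁻¹
        = ∑ k ∈ range N, logDeriv (fun u => z - ζ ^ k * u) w := by
          simp [logDeriv_apply, div_eq_mul_inv]
      _ = logDeriv (fun u => ∏ k ∈ range N, (z - ζ ^ k * u)) w :=
        (logDeriv_prod hne fun _ _ => by fun_prop).symm
      _ = -(N * w ^ (N - 1) / (z ^ N - w ^ N)) := by
        simp_rw [← hζ.pow_sub_pow_eq_prod hN]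
        simp [logDeriv_apply, neg_div]
  simpa [neg_mul, sum_neg_distrib] using h

end IsPrimitiveRoot

end RootsOfUnity

section PowerSums

open Polynomial

variable {K ι : Type*} [Field K] {s : Finset ι} {μ b : ι → K} {n : ℕ}

theorem sum_eval_mul_eq_zero (h : ∀ i < n, ∑ r ∈ s, μ r ^ i * b r = 0) {P : K[X]}
    (hP : P.natDegree < n) : ∑ r ∈ s, P.eval (μ r) * b r = 0 := by
  simp_rw [eval_eq_sum_range' hP, sum_mul, mul_assoc]
  rw [sum_comm]
  exact sum_eq_zero fun i hi => by rw [← mul_sum, h i (mem_range.mp hi), mul_zero]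

theorem mul_prod_sub_add_mul_prod_sub_eq_zero [DecidableEq ι]
    (h : ∀ i < n, ∑ r ∈ s, μ r ^ i * b r = 0) (hs : #s ≤ n + 1) {p q : ι} (hp : p ∈ s)
    (hq : q ∈ s) (hpq : p ≠ q) :
    b p * ∏ r ∈ (s.erase p).erase q, (μ p - μ r)
      + b q * ∏ r ∈ (s.erase p).erase q, (μ q - μ r) = 0 := by
  set T := (s.erase p).erase q
  have hq' : q ∈ s.erase p := mem_erase.mpr ⟨hpq.symm, hq⟩
  have hdeg : (Lagrange.nodal T μ).natDegree < n := by
    rw [Lagrange.natDegree_nodal, card_erase_of_mem hq', card_erase_of_mem hp]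
    have := one_lt_card.mpr ⟨p, hp, q, hq, hpq⟩
    omega
  have hT : ∑ r ∈ T, (Lagrange.nodal T μ).eval (μ r) * b r = 0 :=
    sum_eq_zero fun r hr => by rw [Lagrange.eval_nodal, prod_eq_zero hr (sub_self _), zero_mul]
  have := sum_eval_mul_eq_zero h hdeg
  rw [← add_sum_erase _ _ hp, ← add_sum_erase _ _ hq', hT, Lagrange.eval_nodal,
    Lagrange.eval_nodal] at this
  linear_combination this

end PowerSums

section Recurrence

theorem prod_erase_erase_shift {M : Type*} [CommMonoid M] (F : ℕ → M) {m t : ℕ} (ht : t < m) :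
    F 0 * F (t + 2) * ∏ r ∈ ((range (m + 1)).erase t).erase (t + 1), F (r + 1)
      = F t * F (m + 1) * ∏ r ∈ ((range (m + 1)).erase t).erase (t + 1), F r := by
  rw [← prod_image (g := (· + 1)) (by simp), mul_assoc, ← prod_insert (by simp),
    ← prod_insert (by simp), mul_assoc, ← prod_insert (by simp),
    ← prod_insert (by simp; omega)]
  congr 1
  ext r
  rcases r with _ | r <;> simp <;> omega

theorem prod_erase_castSucc_erase_succ {M : Type*} [CommMonoid M] {m : ℕ} (t : Fin m)
    (G : ℕ → M) : ∏ r ∈ (univ.erase t.castSucc).erase t.succ, G r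
      = ∏ r ∈ ((range (m + 1)).erase t).erase (t + 1), G r := by
  rw [← prod_image (g := Fin.val) Fin.val_injective.injOn]
  congr 1
  ext r
  simp only [mem_image, mem_erase, mem_univ, mem_range, ne_eq, Fin.ext_iff, Fin.val_castSucc,
    Fin.val_succ, and_true]
  exact ⟨fun ⟨a, ha, hr⟩ => hr ▸ ⟨ha.1, ha.2, a.is_lt⟩,
    fun h => ⟨⟨r, h.2.2⟩, ⟨h.1, h.2.1⟩, rfl⟩⟩

variable {N m j : ℕ}

theorem intCast_mul_add_ne_zero (hj : 0 < j) (hjN : j < N) (A : ℤ) : (A : ℂ) * N + j ≠ 0 := by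
  have : A * N + j ≠ 0 := by
    intro h
    rcases le_or_gt 0 A with hA | hA <;> nlinarith
  exact_mod_cast this

/-- The numbers whose odd powers weight the linear system for the `a_t`. -/
def lam (N m j t : ℕ) : ℂ := ((m : ℂ) - 2 * t) * N + j

theorem lam_ne_zero (hj : 0 < j) (hjN : j < N) (t : ℕ) : lam N m j t ≠ 0 := by
  simpa [lam] using intCast_mul_add_ne_zero hj hjN (m - 2 * t)

theorem lam_sq_sub_lam_sq_ne_zero (hj : 0 < j) (hjN : j < N) {t r : ℕ} (htr : t ≠ r) :
    lam N m j t ^ 2 - lam N m j r ^ 2 ≠ 0 := by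
  have hN : (N : ℂ) ≠ 0 := by exact_mod_cast (by omega : N ≠ 0)
  have hrt : (r : ℂ) - t ≠ 0 := sub_ne_zero.mpr (by exact_mod_cast htr.symm)
  rw [show lam N m j t ^ 2 - lam N m j r ^ 2
      = 4 * N * ((r : ℂ) - t) * (((m - t - r : ℤ) : ℂ) * N + j) by
    simp only [lam]; push_cast; ring]
  exact mul_ne_zero (mul_ne_zero (mul_ne_zero (by norm_num) hN) hrt)
    (intCast_mul_add_ne_zero hj hjN _)

theorem mul_lam_mul_prod_sq_sub_eq {t : ℕ} (ht : t < m) :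
    ((t : ℂ) + 1) * N * (j - ((t : ℂ) + 1) * N) * lam N m j t
        * ∏ r ∈ ((range (m + 1)).erase t).erase (t + 1), (lam N m j t ^ 2 - lam N m j r ^ 2)
      = (((m : ℂ) - t) * N + j) * (((m : ℂ) - t) * N) * lam N m j (t + 1)
        * ∏ r ∈ ((range (m + 1)).erase t).erase (t + 1),
            (lam N m j (t + 1) ^ 2 - lam N m j r ^ 2) := by
  set T := ((range (m + 1)).erase t).erase (t + 1)
  set L : ℕ → ℂ := fun r => (r : ℂ) - t - 1
  set K : ℕ → ℂ := fun r => ((m : ℂ) - t - r) * N + j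
  have hL := prod_erase_erase_shift L ht
  have hK := prod_erase_erase_shift K ht
  have h0 : ∀ r ∈ T, lam N m j t ^ 2 - lam N m j r ^ 2 = 4 * N * (L (r + 1) * K r) :=
    fun r _ => by simp only [lam, L, K]; push_cast; ring
  have h1 : ∀ r ∈ T, lam N m j (t + 1) ^ 2 - lam N m j r ^ 2 = 4 * N * (L r * K (r + 1)) :=
    fun r _ => by simp only [lam, L, K]; push_cast; ring
  rw [prod_congr rfl h0, prod_congr rfl h1]
  simp only [prod_mul_distrib, prod_const]
  generalize ∏ r ∈ T, L (r + 1) = PL₁ at hL ⊢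
  generalize ∏ r ∈ T, L r = PL₀ at hL ⊢
  generalize ∏ r ∈ T, K (r + 1) = PK₁ at hK ⊢
  generalize ∏ r ∈ T, K r = PK₀ at hK ⊢
  simp only [L, K, lam] at hL hK ⊢
  push_cast at hL hK ⊢
  linear_combination (-4 ^ #T * (N : ℂ) ^ #T * N * (t + 1) * PL₁) * hK
    - (4 ^ #T * (N : ℂ) ^ #T * N * (((m : ℂ) - t) * N + j) * (((m : ℂ) - 2 * (t + 1)) * N + j)
      * PK₁) * hL

theorem coeff_recurrence (hj : 0 < j) (hjN : j < N) {a : Fin (m + 1) → ℂ}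
    (h : ∀ i < m, ∑ t : Fin (m + 1), lam N m j t ^ (2 * i + 1) * a t = 0) (t : Fin m) :
    ((t : ℂ) + 1) * N * (j - ((t : ℂ) + 1) * N) * a t.succ
      + (((m : ℂ) - t) * N + j) * (((m : ℂ) - t) * N) * a t.castSucc = 0 := by
  have hpow : ∀ i < m, ∑ r : Fin (m + 1), (lam N m j r ^ 2) ^ i * (lam N m j r * a r) = 0 :=
    fun i hi => by
      rw [← h i hi]
      exact sum_congr rfl fun r _ => by ring
  have hpair := mul_prod_sub_add_mul_prod_sub_eq_zero (μ := fun r : Fin (m + 1) => lam N m j r ^ 2)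
    (b := fun r => lam N m j r * a r) hpow (by simp) (mem_univ t.castSucc) (mem_univ t.succ)
    (Fin.castSucc_lt_succ (i := t)).ne
  simp only [Fin.val_castSucc, Fin.val_succ] at hpair
  rw [prod_erase_castSucc_erase_succ t (fun r => lam N m j t ^ 2 - lam N m j r ^ 2),
    prod_erase_castSucc_erase_succ t (fun r => lam N m j (t + 1) ^ 2 - lam N m j r ^ 2)] at hpair
  have hne : lam N m j (t + 1) * ∏ r ∈ ((range (m + 1)).erase t).erase (t + 1),
      (lam N m j (t + 1) ^ 2 - lam N m j r ^ 2) ≠ 0 :=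
    mul_ne_zero (lam_ne_zero hj hjN _) (prod_ne_zero_iff.mpr fun r hr =>
      lam_sq_sub_lam_sq_ne_zero hj hjN (ne_of_mem_erase hr).symm)
  refine (mul_eq_zero.mp ?_).resolve_right hne
  linear_combination (((t : ℂ) + 1) * N * (j - ((t : ℂ) + 1) * N)) * hpair
    - a t.castSucc * mul_lam_mul_prod_sq_sub_eq (N := N) (j := j) t.isLt

end Recurrence

section Operator

theorem fderiv_sum_const_mul_apply {E ι : Type*} [NormedAddCommGroup E] [NormedSpace ℝ E]
    (s : Finset ι) (c : ι → ℂ) {f : ι → E → ℂ} {y : E}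
    (hf : ∀ i ∈ s, DifferentiableAt ℝ (f i) y) (v : E) :
    fderiv ℝ (fun y => ∑ i ∈ s, c i * f i y) y v
      = ∑ i ∈ s, c i * fderiv ℝ (f i) y v := by
  rw [fderiv_fun_sum fun i hi => (hf i hi).const_mul (c i), _root_.sum_apply]
  exact sum_congr rfl fun i hi => by rw [fderiv_const_mul (hf i hi)]; rfl

variable {N m : ℕ}

theorem LopC_sum {ι : Type*} (s : Finset ι) (c : ι → ℂ) {f : ι → ℝ × ℝ → ℂ}
    (hf : ∀ i ∈ s, ContDiff ℝ 2 (f i)) (x : ℝ × ℝ) :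
    LopC N m (fun y => ∑ i ∈ s, c i * f i y) x = ∑ i ∈ s, c i * LopC N m (f i) x := by
  have hd : ∀ i ∈ s, Differentiable ℝ (f i) := fun i hi =>
    (hf i hi).differentiable (by norm_num)
  have hd' : ∀ v, ∀ i ∈ s, Differentiable ℝ (fun y => fderiv ℝ (f i) y v) := fun v i hi =>
    (((hf i hi).fderiv_right (m := 1) (by norm_num)).clm_apply contDiff_const).differentiable
      (by norm_num)
  simp only [LopC, fun v => fderiv_sum_const_mul_apply s c (fun i hi => (hd' v i hi) x) v,
    fderiv_sum_const_mul_apply s c (fun i hi => (hd i hi).differentiableAt), sum_div, mul_sum,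
    mul_sub, mul_add, sum_add_distrib, sum_sub_distrib, mul_div_assoc]
  rw [sum_comm]
  congr 1
  exact sum_congr rfl fun i _ => sum_congr rfl fun k _ => by ring

theorem LopC_conj (f : ℝ × ℝ → ℂ) (x : ℝ × ℝ) :
    LopC N m (fun y => conj (f y)) x = conj (LopC N m f x) := by
  have h : ∀ (g : ℝ × ℝ → ℂ) (y v : ℝ × ℝ),
      fderiv ℝ (fun y => conj (g y)) y v = conj (fderiv ℝ g y v) := fun g y v =>
    congrArg (· v) (Complex.conjCLE.comp_fderiv (f := g) (x := y))
  simp only [LopC, h, map_sub, map_add, map_mul, map_sum, map_div₀, Complex.conj_ofReal,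
    map_natCast, map_ofNat]

end Operator

section Monomials

theorem zOf_eq_equivRealProdCLM_symm : zOf = Complex.equivRealProdCLM.symm :=
  funext fun x => (Complex.equivRealProdCLM_symm_apply x).symm

noncomputable def monomialZ (p q : ℕ) (x : ℝ × ℝ) : ℂ := conj (zOf x) ^ p * zOf x ^ q

theorem contDiff_monomialZ (p q : ℕ) : ContDiff ℝ 2 (monomialZ p q) := by
  have hz : ContDiff ℝ 2 zOf :=
    zOf_eq_equivRealProdCLM_symm ▸ Complex.equivRealProdCLM.symm.contDiff
  exact ((Complex.conjCLE.contDiff.comp hz).pow p).mul (hz.pow q)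

theorem differentiable_monomialZ (p q : ℕ) : Differentiable ℝ (monomialZ p q) :=
  (contDiff_monomialZ p q).differentiable (by norm_num)

theorem fderiv_monomialZ_apply (p q : ℕ) (y v : ℝ × ℝ) :
    fderiv ℝ (monomialZ p q) y v
      = p * conj (zOf v) * monomialZ (p - 1) q y + q * zOf v * monomialZ p (q - 1) y := by
  have hz : HasFDerivAt zOf (Complex.equivRealProdCLM.symm : ℝ × ℝ →L[ℝ] ℂ) y :=
    zOf_eq_equivRealProdCLM_symm ▸ Complex.equivRealProdCLM.symm.hasFDerivAt
  have hw := Complex.conjCLE.hasFDerivAt.comp y hz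
  rw [show monomialZ p q = fun y => (Complex.conjCLE ∘ zOf) y ^ p * zOf y ^ q from rfl,
    ((hw.pow p).fun_mul (hz.pow q)).fderiv]
  simp [monomialZ, zOf_eq_equivRealProdCLM_symm]
  ring

theorem laplacian_monomialZ (p q : ℕ) (x : ℝ × ℝ) :
    fderiv ℝ (fun y => fderiv ℝ (monomialZ p q) y (1, 0)) x (1, 0)
      + fderiv ℝ (fun y => fderiv ℝ (monomialZ p q) y (0, 1)) x (0, 1)
      = 4 * p * q * monomialZ (p - 1) (q - 1) x := by
  have h : ∀ v, fderiv ℝ (fun y => fderiv ℝ (monomialZ p q) y v) x v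
      = p * conj (zOf v) * fderiv ℝ (monomialZ (p - 1) q) x v
        + q * zOf v * fderiv ℝ (monomialZ p (q - 1)) x v := fun v => by
    simp_rw [fderiv_monomialZ_apply p q]
    have hM := differentiable_monomialZ
    rw [fderiv_fun_add ((hM _ _ x).const_mul _) ((hM _ _ x).const_mul _),
      fderiv_const_mul (hM _ _ x), fderiv_const_mul (hM _ _ x)]
    rfl
  rw [h, h]
  simp only [fderiv_monomialZ_apply, zOf, Complex.ofReal_one, Complex.ofReal_zero, zero_mul,
    add_zero, one_mul, zero_add, map_one, Complex.conj_I, Nat.sub_sub]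
  linear_combination (p * (p - 1 : ℕ) * monomialZ (p - 2) q x
    + q * (q - 1 : ℕ) * monomialZ p (q - 2) x - 2 * p * q * monomialZ (p - 1) (q - 1) x)
      * Complex.I_sq

end Monomials

section MonomialImage

theorem natCast_mul_pow_sub_one_mul {R : Type*} [CommSemiring R] (p : ℕ) (a : R) :
    (p : R) * a ^ (p - 1) * a = p * a ^ p := by
  cases p <;> simp [pow_succ, mul_assoc]

-- Multiplying by `z z̄` clears the truncated exponents `p - 1`, `q - 1`.
theorem mul_fderiv_monomialZ_apply (p q : ℕ) (y v : ℝ × ℝ) :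
    zOf y * conj (zOf y) * fderiv ℝ (monomialZ p q) y v
      = monomialZ p q y * (p * conj (zOf v) * zOf y + q * zOf v * conj (zOf y)) := by
  rw [fderiv_monomialZ_apply]
  simp only [monomialZ]
  linear_combination
    (conj (zOf v) * zOf y * zOf y ^ q) * natCast_mul_pow_sub_one_mul p (conj (zOf y))
      + (zOf v * conj (zOf y) * conj (zOf y) ^ p) * natCast_mul_pow_sub_one_mul q (zOf y)

theorem mul_laplacian_monomialZ (p q : ℕ) (x : ℝ × ℝ) :
    zOf x * conj (zOf x) * (fderiv ℝ (fun y => fderiv ℝ (monomialZ p q) y (1, 0)) x (1, 0)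
      + fderiv ℝ (fun y => fderiv ℝ (monomialZ p q) y (0, 1)) x (0, 1))
      = 4 * p * q * monomialZ p q x := by
  rw [laplacian_monomialZ]
  simp only [monomialZ]
  linear_combination
    (4 * (q * zOf x ^ (q - 1) * zOf x)) * natCast_mul_pow_sub_one_mul p (conj (zOf x))
      + (4 * p * conj (zOf x) ^ p) * natCast_mul_pow_sub_one_mul q (zOf x)

theorem zOf_rotate (θ : ℝ) :
    zOf (-Real.sin θ, Real.cos θ) = Complex.I * Complex.exp (θ * Complex.I) := by
  rw [Complex.exp_mul_I, zOf]
  push_cast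
  linear_combination -Complex.sin θ * Complex.I_sq

theorem inner_rotate_mul_exp (θ : ℝ) (x : ℝ × ℝ) :
    ((-Real.sin θ * x.1 + Real.cos θ * x.2 : ℝ) : ℂ) * (2 * Complex.I)
        * Complex.exp (θ * Complex.I)
      = zOf x - Complex.exp (θ * Complex.I) ^ 2 * conj (zOf x) := by
  simp only [Complex.exp_mul_I, zOf, map_add, map_mul, Complex.conj_ofReal, Complex.conj_I]
  push_cast
  linear_combination (x.1 + x.2 * Complex.I) * Complex.sin_sq_add_cos_sq θ
    - (x.1 + x.2 * Complex.I) * Complex.sin θ ^ 2 * Complex.I_sq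

theorem exp_mul_I_mul_conj (θ : ℝ) :
    Complex.exp (θ * Complex.I) * conj (Complex.exp (θ * Complex.I)) = 1 := by
  rw [Complex.mul_conj, Complex.normSq_eq_norm_sq, Complex.norm_exp_ofReal_mul_I]
  norm_num

theorem mul_fderiv_monomialZ_div_inner (p q : ℕ) (θ : ℝ) {x : ℝ × ℝ}
    (hd : -Real.sin θ * x.1 + Real.cos θ * x.2 ≠ 0) :
    zOf x * conj (zOf x) * (fderiv ℝ (monomialZ p q) x (-Real.sin θ, Real.cos θ)
        / ((-Real.sin θ * x.1 + Real.cos θ * x.2 : ℝ) : ℂ))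
      = 2 * monomialZ p q x * (p * zOf x - q * Complex.exp (θ * Complex.I) ^ 2 * conj (zOf x))
        / (zOf x - Complex.exp (θ * Complex.I) ^ 2 * conj (zOf x)) := by
  have hEuler := mul_fderiv_monomialZ_apply p q x (-Real.sin θ, Real.cos θ)
  have hE := exp_mul_I_mul_conj θ
  rw [zOf_rotate, map_mul, Complex.conj_I] at hEuler
  rw [← inner_rotate_mul_exp]
  have hd' : ((-Real.sin θ * x.1 + Real.cos θ * x.2 : ℝ) : ℂ) ≠ 0 :=
    Complex.ofReal_ne_zero.mpr hd
  generalize ((-Real.sin θ * x.1 + Real.cos θ * x.2 : ℝ) : ℂ) = d at hd' ⊢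
  field_simp
  linear_combination (Complex.I * Complex.exp (θ * Complex.I)) * hEuler
    + monomialZ p q x * (q * Complex.exp (θ * Complex.I) ^ 2 * conj (zOf x)
      - p * zOf x * Complex.exp (θ * Complex.I) * conj (Complex.exp (θ * Complex.I)))
      * Complex.I_sq
    + p * zOf x * monomialZ p q x * hE

theorem exp_mul_I_sq_eq (N k : ℕ) :
    Complex.exp (((Real.pi * k / N : ℝ) : ℂ) * Complex.I) ^ 2
      = Complex.exp (2 * Real.pi * Complex.I / N) ^ k := by
  rw [← Complex.exp_nat_mul, ← Complex.exp_nat_mul]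
  congr 1
  push_cast
  ring

variable {N : ℕ} {x : ℝ × ℝ}

theorem sub_pow_mul_conj_ne_zero
    (hreg : ∀ k < N, -Real.sin (Real.pi * k / N) * x.1 + Real.cos (Real.pi * k / N) * x.2 ≠ 0) :
    ∀ k ∈ range N, zOf x - Complex.exp (2 * Real.pi * Complex.I / N) ^ k * conj (zOf x) ≠ 0 :=
  fun k hk => by
    rw [← exp_mul_I_sq_eq, ← inner_rotate_mul_exp]
    exact mul_ne_zero (mul_ne_zero (Complex.ofReal_ne_zero.mpr (hreg k (mem_range.mp hk)))
      (by simp)) (Complex.exp_ne_zero _)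

theorem mul_LopC_monomialZ (m : ℕ) (hN : 0 < N)
    (hreg : ∀ k < N, -Real.sin (Real.pi * k / N) * x.1 + Real.cos (Real.pi * k / N) * x.2 ≠ 0)
    (p q : ℕ) :
    zOf x * conj (zOf x) * (zOf x ^ N - conj (zOf x) ^ N) * LopC N m (monomialZ p q) x
      = 4 * monomialZ p q x
        * (p * (q - m * N) * zOf x ^ N + q * (m * N - p) * conj (zOf x) ^ N) := by
  have hζ := Complex.isPrimitiveRoot_exp N hN.ne'
  have hne := sub_pow_mul_conj_ne_zero hreg
  set ζ := Complex.exp (2 * Real.pi * Complex.I / N)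
  set z := zOf x
  set w := conj z
  have hsing : z * w * (z ^ N - w ^ N) * ∑ k ∈ range N,
      fderiv ℝ (monomialZ p q) x (-Real.sin (Real.pi * k / N), Real.cos (Real.pi * k / N))
        / ((-Real.sin (Real.pi * k / N) * x.1 + Real.cos (Real.pi * k / N) * x.2 : ℝ) : ℂ)
      = 2 * N * monomialZ p q x * (p * z ^ N - q * w ^ N) := by
    rw [mul_right_comm, mul_sum,
      sum_congr rfl fun k hk => mul_fderiv_monomialZ_div_inner p q _ (hreg k (mem_range.mp hk))]
    simp only [exp_mul_I_sq_eq]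
    have hsplit : ∀ k ∈ range N,
        2 * monomialZ p q x * (p * z - q * ζ ^ k * w) / (z - ζ ^ k * w)
          = 2 * monomialZ p q x
            * (p * z * (z - ζ ^ k * w)⁻¹ - q * w * (ζ ^ k * (z - ζ ^ k * w)⁻¹)) :=
      fun k _ => by ring
    rw [sum_congr rfl hsplit, ← mul_sum, sum_sub_distrib, ← mul_sum, ← mul_sum,
      hζ.sum_inv_sub_pow_mul hN hne, hζ.sum_pow_mul_inv_sub_pow_mul hN hne]
    have hD : z ^ N - w ^ N ≠ 0 := by
      rw [hζ.pow_sub_pow_eq_prod hN]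
      exact prod_ne_zero_iff.mpr hne
    field_simp
    linear_combination
      (N * monomialZ p q x) * (p * mul_pow_sub_one hN.ne' z - q * mul_pow_sub_one hN.ne' w)
  have hΔ := mul_laplacian_monomialZ p q x
  rw [LopC]
  linear_combination (z ^ N - w ^ N) * hΔ - 2 * m * hsing

end MonomialImage

theorem Fin.sum_add_eq_add_add_sum_succ_castSucc {M : Type*} [AddCommMonoid M] {n : ℕ}
    (f g : Fin (n + 1) → M) :
    ∑ i, (f i + g i) = f 0 + g (Fin.last n) + ∑ i : Fin n, (f i.succ + g i.castSucc) := by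
  rw [sum_add_distrib, Fin.sum_univ_succ f, Fin.sum_univ_castSucc g, sum_add_distrib]
  abel

theorem monomialZ_add_mul (p q N : ℕ) (x : ℝ × ℝ) :
    monomialZ (p + N) q x * zOf x ^ N = monomialZ p (q + N) x * conj (zOf x) ^ N := by
  simp only [monomialZ, pow_add]
  ring

theorem qj_eq_sum_monomialZ (N m j : ℕ) (a : Fin (m + 1) → ℂ) :
    qj N m j a = fun y => ∑ t, a t * monomialZ (t * N) ((m - t) * N + j) y := by
  funext y
  simp only [qj, monomialZ, mul_assoc]

theorem zOf_mul_conj_mul_sub_ne_zero {N : ℕ} {x : ℝ × ℝ} (hN : 0 < N)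
    (hreg : ∀ k < N, -Real.sin (Real.pi * k / N) * x.1 + Real.cos (Real.pi * k / N) * x.2 ≠ 0) :
    zOf x * conj (zOf x) * (zOf x ^ N - conj (zOf x) ^ N) ≠ 0 := by
  have hζ := Complex.isPrimitiveRoot_exp N hN.ne'
  have hne := sub_pow_mul_conj_ne_zero hreg
  have hz : zOf x ≠ 0 := fun hz => hne 0 (mem_range.mpr hN) (by simp [hz])
  refine mul_ne_zero (mul_ne_zero hz ((map_ne_zero _).mpr hz)) ?_
  rw [hζ.pow_sub_pow_eq_prod hN]
  exact prod_ne_zero_iff.mpr hne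

theorem sum_coeff_mul_monomialZ_eq_zero {N m j : ℕ} {a : Fin (m + 1) → ℂ}
    (hrec : ∀ t : Fin m, ((t : ℂ) + 1) * N * (j - ((t : ℂ) + 1) * N) * a t.succ
      + (((m : ℂ) - t) * N + j) * (((m : ℂ) - t) * N) * a t.castSucc = 0) (x : ℝ × ℝ) :
    ∑ t : Fin (m + 1),
      (4 * ((t : ℕ) * N * (j - (t : ℕ) * N)) * a t
          * (monomialZ (t * N) ((m - t) * N + j) x * zOf x ^ N)
        + 4 * (((m - (t : ℕ)) * N + j) * ((m - (t : ℕ)) * N)) * a t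
          * (monomialZ (t * N) ((m - t) * N + j) x * conj (zOf x) ^ N)) = 0 := by
  have hshift : ∀ t : Fin m, monomialZ ((t + 1) * N) ((m - (t + 1)) * N + j) x * zOf x ^ N
      = monomialZ (t * N) ((m - t) * N + j) x * conj (zOf x) ^ N := fun t => by
    have h1 : (↑t + 1) * N = ↑t * N + N := by ring
    have h2 : (m - ↑t) * N + j = (m - (↑t + 1)) * N + j + N := by
      rw [show m - ↑t = m - (↑t + 1) + 1 by omega]
      ring
    rw [h1, h2]
    exact monomialZ_add_mul _ _ _ _
  rw [Fin.sum_add_eq_add_add_sum_succ_castSucc]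
  simp only [Fin.val_zero, Fin.val_last, Fin.val_succ, Fin.val_castSucc, hshift]
  rw [sum_eq_zero fun t _ => by
    push_cast
    linear_combination (4 * monomialZ (t * N) ((m - t) * N + j) x * conj (zOf x) ^ N) * hrec t]
  simp

theorem LopC_qj_eq_zero {N m j : ℕ} (hj : 0 < j) (hjN : j < N) {a : Fin (m + 1) → ℂ}
    (h : ∀ i < m, ∑ t : Fin (m + 1), lam N m j t ^ (2 * i + 1) * a t = 0) {x : ℝ × ℝ}
    (hreg : ∀ k < N, -Real.sin (Real.pi * k / N) * x.1 + Real.cos (Real.pi * k / N) * x.2 ≠ 0) :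
    LopC N m (qj N m j a) x = 0 := by
  have hN : 0 < N := by omega
  refine (mul_eq_zero.mp ?_).resolve_left (zOf_mul_conj_mul_sub_ne_zero hN hreg)
  rw [qj_eq_sum_monomialZ, LopC_sum _ _ fun t _ => contDiff_monomialZ _ _, mul_sum,
    ← sum_coeff_mul_monomialZ_eq_zero (coeff_recurrence hj hjN h) x]
  refine sum_congr rfl fun t _ => ?_
  rw [mul_left_comm, mul_LopC_monomialZ m hN hreg]
  push_cast [Nat.cast_sub (Nat.lt_succ_iff.mp t.isLt)]
  ring

theorem stmt16_general (N m : ℕ) (j : ℕ) (hj1 : 1 ≤ j) (hj2 : j ≤ N - 1)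
    (a : Fin (m+1) → ℂ)
    (hsys : ∀ s : ℕ, 1 ≤ s → s ≤ m →
      ∑ t : Fin (m+1),
        (((((m:ℤ) - 2 * (t:ℕ)) * N + j : ℤ)) : ℂ)^(2*s-1) * a t = 0) :
    ∀ x : ℝ × ℝ,
      (∀ k < N, (-Real.sin (Real.pi * k / N)) * x.1 + Real.cos (Real.pi * k / N) * x.2 ≠ 0) →
      LopC N m (qj N m j a) x = 0 ∧ LopC N m (qbarj N m j a) x = 0 := by
  intro x hreg
  have h : ∀ i < m, ∑ t : Fin (m + 1), lam N m j t ^ (2 * i + 1) * a t = 0 := fun i hi => by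
    have := hsys (i + 1) (by omega) hi
    rw [show 2 * (i + 1) - 1 = 2 * i + 1 by omega] at this
    push_cast at this
    exact this
  have hq := LopC_qj_eq_zero hj1 (by omega) h hreg
  refine ⟨hq, ?_⟩
  have hqbar : qbarj N m j a = fun y => conj (qj N m j a y) := by
    funext y
    simp [qbarj, qj]
  rw [hqbar, LopC_conj, hq, map_zero]

/-- The basic quasiinvariants `q_j`, `q̄_j` of `I₂(N)` are annihilated by the gauged
Calogero–Moser operator, i.e. they are `m`-harmonic. -/
theorem stmt16 (N m : ℕ) (hN : 2 ≤ N) (j : ℕ) (hj1 : 1 ≤ j) (hj2 : j ≤ N - 1)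
    (a : Fin (m+1) → ℂ) (ha : a ≠ 0)
    (hsys : ∀ s : ℕ, 1 ≤ s → s ≤ m →
      ∑ t : Fin (m+1),
        (((((m:ℤ) - 2 * (t:ℕ)) * N + j : ℤ)) : ℂ)^(2*s-1) * a t = 0) :
    ∀ x : ℝ × ℝ,
      (∀ k < N, (-Real.sin (Real.pi * k / N)) * x.1 + Real.cos (Real.pi * k / N) * x.2 ≠ 0) →
      LopC N m (qj N m j a) x = 0 ∧ LopC N m (qbarj N m j a) x = 0 :=
  stmt16_general N m j hj1 hj2 a hsys
end
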